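/- arXiv:1810.08429 — 2 statements merged into one kernel-verified Lean document; each statement's English description precedes it below -/
import Mathlib

section
/- Let G ∈ ℝ^{τ̂ × σ̂}, V ∈ ℝ^{τ̂ × τ̃}, V' ∈ ℝ^{σ̂ × σ̃} with τ̃ ⊆ τ̂, σ̃ ⊆ σ̂. If ‖G − V·G|_{τ̃ × σ̂}‖ ≤ ε₁ and ‖G − G|_{τ̂ × σ̃}·(V')ᵀ‖ ≤ ε₂ in the spectral norm, and ‖V‖ ≤ C, then the symmetric factorization satisfies ‖G − V·G|_{τ̃ × σ̃}·(V')ᵀ‖ ≤ ε₁ + C·ε₂. -/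
open scoped Matrix.Norms.L2Operator

/-!
Write `R := G − G|_{τ̂×σ̃} V'ᵀ`. Restricting rows commutes with right multiplication, so
`G − V G|_{τ̃×σ̃} V'ᵀ = (G − V G|_{τ̃×σ̂}) + V R|_{τ̃×σ̂}`. Selecting the rows of an injective
index map is multiplication by a matrix with orthonormal rows, which cannot increase the spectral
norm, so `‖V R|_{τ̃×σ̂}‖ ≤ ‖V‖ ‖R‖ ≤ C ε₂`.
-/

namespace Matrix

variable {𝕜 : Type*} [RCLike 𝕜] {l m n : Type*} [Fintype l]

lemma l2_opNorm_one_le [Fintype n] [DecidableEq n] : ‖(1 : Matrix n n 𝕜)‖ ≤ 1 := by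
  rw [cstar_norm_def, map_one]
  exact ContinuousLinearMap.norm_id_le

lemma l2_opNorm_le_one_of_mul_conjTranspose_eq_one [Fintype m] [Fintype n]
    [DecidableEq m] [DecidableEq n] {E : Matrix m n 𝕜} (hE : E * Eᴴ = 1) : ‖E‖ ≤ 1 := by
  have hsq : ‖E‖ * ‖E‖ ≤ 1 := by
    rw [← l2_opNorm_conjTranspose E, ← l2_opNorm_conjTranspose_mul_self,
      conjTranspose_conjTranspose, hE]
    exact l2_opNorm_one_le
  nlinarith [norm_nonneg E]

lemma l2_opNorm_submatrix_id_le [Fintype m] [Fintype n] [DecidableEq n] {f : l → m}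
    (hf : Function.Injective f) (M : Matrix m n 𝕜) : ‖M.submatrix f id‖ ≤ ‖M‖ := by
  classical
  set E : Matrix l m 𝕜 := (1 : Matrix m m 𝕜).submatrix f id
  have hEM : M.submatrix f id = E * M := by
    simpa using submatrix_mul (1 : Matrix m m 𝕜) M f id id Function.bijective_id
  have hE : E * Eᴴ = 1 := by
    rw [conjTranspose_submatrix, conjTranspose_one,
      ← submatrix_mul _ _ _ _ _ Function.bijective_id, Matrix.one_mul, submatrix_one f hf]
  calc ‖M.submatrix f id‖ = ‖E * M‖ := by rw [hEM]
    _ ≤ ‖E‖ * ‖M‖ := l2_opNorm_mul E M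
    _ ≤ ‖M‖ :=
      mul_le_of_le_one_left (norm_nonneg M) (l2_opNorm_le_one_of_mul_conjTranspose_eq_one hE)

lemma sub_mul_submatrix_mul_eq_add {R o : Type*} [Ring R] [Fintype o]
    (G : Matrix m n R) (V : Matrix m l R) (W : Matrix o n R) (f : l → m) (g : o → n) :
    G - V * G.submatrix f g * W
      = (G - V * G.submatrix f id) + V * (G - G.submatrix id g * W).submatrix f id := by
  rw [submatrix_sub, Pi.sub_apply, Pi.sub_apply, submatrix_mul _ _ f id id Function.bijective_id,
    submatrix_submatrix, Function.id_comp, Function.comp_id, Matrix.mul_sub, Matrix.mul_assoc]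
  abel

end Matrix

theorem symmetric_factorization_error_general
    {α β α' β' : Type*}
    [Fintype α] [Fintype β] [Fintype α'] [Fintype β']
    [DecidableEq β] [DecidableEq α']
    (f : α' → α) (hf : Function.Injective f)
    (g : β' → β)
    (G : Matrix α β ℝ) (V : Matrix α α' ℝ) (V' : Matrix β β' ℝ)
    (ε₁ ε₂ C : ℝ)
    (h₁ : ‖G - V * G.submatrix f id‖ ≤ ε₁)
    (h₂ : ‖G - G.submatrix id g * V'.transpose‖ ≤ ε₂)
    (hV : ‖V‖ ≤ C) :
    ‖G - V * G.submatrix f g * V'.transpose‖ ≤ ε₁ + C * ε₂ := by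
  set R := G - G.submatrix id g * V'.transpose
  have hR : ‖R.submatrix f id‖ ≤ ε₂ := (Matrix.l2_opNorm_submatrix_id_le hf R).trans h₂
  have hC : 0 ≤ C := (norm_nonneg V).trans hV
  calc ‖G - V * G.submatrix f g * V'.transpose‖
      = ‖(G - V * G.submatrix f id) + V * R.submatrix f id‖ := by
        rw [Matrix.sub_mul_submatrix_mul_eq_add]
    _ ≤ ‖G - V * G.submatrix f id‖ + ‖V‖ * ‖R.submatrix f id‖ :=
        norm_add_le_of_le le_rfl (Matrix.l2_opNorm_mul V _)
    _ ≤ ε₁ + C * ε₂ := add_le_add h₁ (mul_le_mul hV hR (norm_nonneg _) hC)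

/-- Error estimate for the symmetric GCA factorization: if
`‖G − V G|_{τ̃×σ̂}‖ ≤ ε₁`, `‖G − G|_{τ̂×σ̃} V'ᵀ‖ ≤ ε₂` (spectral norms) and `‖V‖ ≤ C`,
then `‖G − V G|_{τ̃×σ̃} V'ᵀ‖ ≤ ε₁ + C ε₂`. -/
theorem symmetric_factorization_error
    {α β α' β' : Type*}
    [Fintype α] [Fintype β] [Fintype α'] [Fintype β']
    [DecidableEq β] [DecidableEq α'] [DecidableEq β']
    (f : α' → α) (hf : Function.Injective f)
    (g : β' → β) (hg : Function.Injective g)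
    (G : Matrix α β ℝ) (V : Matrix α α' ℝ) (V' : Matrix β β' ℝ)
    (ε₁ ε₂ C : ℝ)
    (h₁ : ‖G - V * G.submatrix f id‖ ≤ ε₁)
    (h₂ : ‖G - G.submatrix id g * V'.transpose‖ ≤ ε₂)
    (hV : ‖V‖ ≤ C) :
    ‖G - V * G.submatrix f g * V'.transpose‖ ≤ ε₁ + C * ε₂ :=
  symmetric_factorization_error_general f hf g G V V' ε₁ ε₂ C h₁ h₂ hV
end

section
/- For a rank-r matrix G ∈ ℝ^{n×m}, there exist row indices I with #I = r and column indices J with #J = r such that the submatrix G|_{I×J} is invertible and G = G|_{·×J} · (G|_{I×J})^{-1} · G|_{I×·} (the full skeleton/CUR decomposition). -/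
/-!
Pick `r` rows `I` forming a basis of the row space and `r` columns `J` forming a basis of the
column space, so that `G = D * G|_{I×·}` and `G = G|_{·×J} * C`. Restricting the second
factorization to the rows `I` gives `G|_{I×·} = G|_{I×J} * C`; as the left side has independent
rows, so does the square matrix `G|_{I×J}`, which is therefore invertible. Restricting the first
factorization to the columns `J` gives `G|_{·×J} = D * G|_{I×J}`, hence
`G|_{·×J} * G|_{I×J}⁻¹ * G|_{I×·} = D * G|_{I×·} = G`.
-/

open Submodule

namespace Matrix

variable {R K : Type*} [Semiring R] [Field K] {l m n : Type*}

theorem exists_eq_mul_of_row_mem_span [Fintype l] (A : Matrix m n R) (B : Matrix l n R)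
    (h : ∀ i, A i ∈ span R (Set.range B.row)) : ∃ D : Matrix m l R, A = D * B := by
  have hA : ∀ i, ∃ v, v ᵥ* B = A i := fun i => by
    simpa only [← range_vecMulLinear, LinearMap.mem_range, coe_vecMulLinear] using h i
  choose D hD using hA
  exact ⟨D, funext fun i => (hD i).symm⟩

theorem isUnit_of_linearIndependent_row_mul [Fintype l] [DecidableEq l] [Fintype n]
    (U : Matrix l l K) (C : Matrix l n K) (h : LinearIndependent K (U * C).row) : IsUnit U := by
  rw [← vecMul_injective_iff] at h
  rw [← vecMul_injective_iff_isUnit]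
  refine .of_comp (f := (· ᵥ* C)) ?_
  simpa only [Function.comp_def, vecMul_vecMul] using h

theorem exists_linearIndependent_row_span_eq [Fintype m] [Fintype n] {r : ℕ} (A : Matrix m n K)
    (hr : A.rank = r) :
    ∃ I : Fin r → m, LinearIndependent K (A.submatrix I id).row ∧
      span K (Set.range (A.submatrix I id).row) = span K (Set.range A.row) := by
  obtain ⟨κ, a, -, hspan, hli⟩ := exists_linearIndependent' K A.row
  have : Fintype κ := @Fintype.ofFinite _ hli.finite
  have hcard : Fintype.card κ = r := by
    rw [← hr, rank_eq_finrank_span_row, ← hspan, finrank_span_eq_card hli]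
  let e : Fin r ≃ κ := (Fintype.equivFinOfCardEq hcard).symm
  refine ⟨a ∘ e, hli.comp e e.injective, ?_⟩
  rw [← hspan]
  exact congrArg _ (e.surjective.range_comp (A.row ∘ a))

theorem exists_linearIndependent_row_eq_mul [Fintype m] [Fintype n] {r : ℕ} (A : Matrix m n K)
    (hr : A.rank = r) :
    ∃ (I : Fin r → m) (D : Matrix m (Fin r) K),
      LinearIndependent K (A.submatrix I id).row ∧ A = D * A.submatrix I id := by
  obtain ⟨I, hli, hspan⟩ := A.exists_linearIndependent_row_span_eq hr
  obtain ⟨D, hD⟩ := A.exists_eq_mul_of_row_mem_span (A.submatrix I id) fun i =>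
    hspan ▸ subset_span ⟨i, rfl⟩
  exact ⟨I, D, hli, hD⟩

theorem exists_linearIndependent_col_eq_mul [Fintype m] [Fintype n] {r : ℕ} (A : Matrix m n K)
    (hr : A.rank = r) :
    ∃ (J : Fin r → n) (C : Matrix (Fin r) n K),
      LinearIndependent K (A.submatrix id J).col ∧ A = A.submatrix id J * C := by
  obtain ⟨J, D, hli, hD⟩ := Aᵀ.exists_linearIndependent_row_eq_mul (A.rank_transpose.trans hr)
  refine ⟨J, Dᵀ, ?_, ?_⟩
  · rwa [← transpose_submatrix, row_transpose] at hli
  · simpa only [transpose_transpose, transpose_mul, transpose_submatrix] using congrArg transpose hD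

end Matrix

open Matrix

/-- Full skeleton/CUR decomposition: a rank-`r` matrix `G ∈ ℝ^{n×m}` has `r` rows and
`r` columns such that the intersection submatrix is invertible and
`G = G|_{·×J} (G|_{I×J})⁻¹ G|_{I×·}`. -/
theorem cur_decomposition
    {n m : ℕ} (G : Matrix (Fin n) (Fin m) ℝ) (r : ℕ) (hr : G.rank = r) :
    ∃ (I : Fin r → Fin n) (J : Fin r → Fin m),
      Function.Injective I ∧ Function.Injective J ∧
      IsUnit (G.submatrix I J) ∧
      G = G.submatrix id J * (G.submatrix I J)⁻¹ * G.submatrix I id := by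
  obtain ⟨I, D, hI, hD⟩ := G.exists_linearIndependent_row_eq_mul hr
  obtain ⟨J, C, hJ, hC⟩ := G.exists_linearIndependent_col_eq_mul hr
  have hRows : G.submatrix I id = G.submatrix I J * C := by
    conv_lhs => rw [hC]
    simpa using submatrix_mul (G.submatrix id J) C I id id Function.bijective_id
  have hCols : G.submatrix id J = D * G.submatrix I J := by
    conv_lhs => rw [hD]
    simpa using submatrix_mul D (G.submatrix I id) id id J Function.bijective_id
  have hU : IsUnit (G.submatrix I J) :=
    isUnit_of_linearIndependent_row_mul _ C (hRows ▸ hI)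
  refine ⟨I, J, .of_comp (f := G) hI.injective, .of_comp (f := Gᵀ) hJ.injective, hU, ?_⟩
  rw [hCols, mul_nonsing_inv_cancel_right _ _ ((isUnit_iff_isUnit_det _).mp hU), ← hD]
end
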